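/- arXiv:1206.1630 — 5 statements merged into one kernel-verified Lean document; each statement's English description precedes it below -/
import Mathlib

section
/- Let T ⊆ ℝ^q be a closed convex set whose interior contains the point x̄ but no point of a set S ⊆ ℝ^q, and suppose S is contained in the cone {x̄ + Σ_j r^j s_j : s ≥ 0}. For each j define s*_j := sup {s_j ≥ 0 : x̄ + r^j s_j ∈ T} (assumed finite and positive), and set α_j := 1/s*_j. Then every point of S of the form x̄ + Σ_j r^j s_j with s ≥ 0 satisfies Σ_j α_j s_j ≥ 1, while the point x̄ itself (s = 0) violates this inequality. -/
/-! Each ray `x̄ + t • rʲ` meets the closed set `T` at its endpoint `x̄ + s*ⱼ • rʲ`, so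
`x̄ + ∑ sⱼ • rʲ = x̄ + ∑ (sⱼ / s*ⱼ) • ((x̄ + s*ⱼ • rʲ) - x̄)` is a combination of `x̄` and points
of `T` in which `x̄` keeps the weight `1 - ∑ sⱼ / s*ⱼ`. When that weight is positive, convexity
puts the point in the interior of `T`, hence outside `S`. -/

open Finset

section Convex

variable {𝕜 E ι : Type*} [Field 𝕜] [LinearOrder 𝕜] [IsStrictOrderedRing 𝕜] [Fintype ι]
  [AddCommGroup E] [Module 𝕜 E]

theorem Convex.add_sum_smul_sub_mem {s : Set E} (hs : Convex 𝕜 s) {x : E} (hx : x ∈ s)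
    {p : ι → E} (hp : ∀ i, p i ∈ s) {w : ι → 𝕜} (hw₀ : ∀ i, 0 ≤ w i) (hw₁ : ∑ i, w i ≤ 1) :
    x + ∑ i, w i • (p i - x) ∈ s := by
  have hmem := hs.sum_mem (t := univ) (w := fun o : Option ι => o.elim (1 - ∑ i, w i) w)
    (z := fun o => o.elim x p)
    (by rintro (_ | i) -; exacts [sub_nonneg.mpr hw₁, hw₀ i])
    (by simp only [Fintype.sum_option, Option.elim]; ring)
    (by rintro (_ | i) -; exacts [hx, hp i])
  convert hmem using 1
  simp only [Fintype.sum_option, Option.elim, smul_sub, sum_sub_distrib, ← sum_smul, sub_smul,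
    one_smul]
  abel

theorem Convex.add_sum_smul_sub_mem_interior [TopologicalSpace E] [IsTopologicalAddGroup E]
    [ContinuousConstSMul 𝕜 E] {s : Set E} (hs : Convex 𝕜 s) {x : E} (hx : x ∈ interior s)
    {p : ι → E} (hp : ∀ i, p i ∈ s) {w : ι → 𝕜} (hw₀ : ∀ i, 0 ≤ w i) (hw₁ : ∑ i, w i < 1) :
    x + ∑ i, w i • (p i - x) ∈ interior s := by
  -- Rescale by `t ∈ (∑ w, 1)`: the point is `(1 - t) • x + t • y` with `y ∈ s`.
  set t : 𝕜 := (1 + ∑ i, w i) / 2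
  have hσ : 0 ≤ ∑ i, w i := sum_nonneg fun i _ => hw₀ i
  have ht₀ : 0 < t := by positivity
  have ht₁ : t < 1 := by simp only [t]; linarith
  have hy : x + ∑ i, (w i / t) • (p i - x) ∈ s := by
    refine hs.add_sum_smul_sub_mem (interior_subset hx) hp
      (fun i => div_nonneg (hw₀ i) ht₀.le) ?_
    rw [← sum_div, div_le_one ht₀]
    simp only [t]
    linarith
  convert hs.combo_interior_self_mem_interior hx hy (sub_pos.mpr ht₁) ht₀.le
    (sub_add_cancel 1 t) using 1
  simp only [smul_add, smul_sum, smul_smul, mul_div_cancel₀ _ ht₀.ne', sub_smul, one_smul]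
  abel

end Convex

theorem IsClosed.add_smul_mem_of_isLUB {E : Type*} [AddCommGroup E] [Module ℝ E]
    [TopologicalSpace E] [ContinuousAdd E] [ContinuousSMul ℝ E] {T : Set E} (hT : IsClosed T)
    {x v : E} (hx : x ∈ T) {c : ℝ} (hc : IsLUB {t : ℝ | 0 ≤ t ∧ x + t • v ∈ T} c) :
    x + c • v ∈ T := by
  have hclosed : IsClosed {t : ℝ | 0 ≤ t ∧ x + t • v ∈ T} :=
    isClosed_Ici.inter (hT.preimage (by fun_prop))
  exact (hclosed.isLUB_mem hc ⟨0, le_rfl, by simpa using hx⟩).2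

theorem intersection_cut_general (q n : ℕ) (T : Set (Fin q → ℝ)) (hTclosed : IsClosed T)
    (hTconv : Convex ℝ T) (xbar : Fin q → ℝ) (hxbar : xbar ∈ interior T)
    (S : Set (Fin q → ℝ)) (hS : ∀ x ∈ S, x ∉ interior T)
    (r : Fin n → Fin q → ℝ)
    (sstar : Fin n → ℝ) (hpos : ∀ j, 0 < sstar j)
    (hsup : ∀ j, IsLUB {t : ℝ | 0 ≤ t ∧ xbar + t • r j ∈ T} (sstar j)) :
    (∀ s : Fin n → ℝ, (∀ j, 0 ≤ s j) → (xbar + ∑ j, s j • r j) ∈ S →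
      1 ≤ ∑ j, s j / sstar j) ∧ (∑ j, (0:ℝ) / sstar j) < 1 := by
  have hcut : ∀ j, xbar + sstar j • r j ∈ T := fun j =>
    hTclosed.add_smul_mem_of_isLUB (interior_subset hxbar) (hsup j)
  refine ⟨fun s hs hxS => ?_, by simp⟩
  by_contra! hlt
  have hrewrite : xbar + ∑ j, s j • r j =
      xbar + ∑ j, (s j / sstar j) • (xbar + sstar j • r j - xbar) := by
    simp only [add_sub_cancel_left, smul_smul, div_mul_cancel₀ _ (hpos _).ne']
  refine hS _ hxS ?_
  rw [hrewrite]
  exact hTconv.add_sum_smul_sub_mem_interior hxbar hcut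
    (fun j => div_nonneg (hs j) (hpos j).le) hlt

/-- Intersection cut theorem (Balas). -/
theorem intersection_cut (q n : ℕ) (T : Set (Fin q → ℝ)) (hTclosed : IsClosed T)
    (hTconv : Convex ℝ T) (xbar : Fin q → ℝ) (hxbar : xbar ∈ interior T)
    (S : Set (Fin q → ℝ)) (hS : ∀ x ∈ S, x ∉ interior T)
    (r : Fin n → Fin q → ℝ)
    (hScone : ∀ x ∈ S, ∃ s : Fin n → ℝ, (∀ j, 0 ≤ s j) ∧ x = xbar + ∑ j, s j • r j)
    (sstar : Fin n → ℝ) (hpos : ∀ j, 0 < sstar j)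
    (hsup : ∀ j, IsLUB {t : ℝ | 0 ≤ t ∧ xbar + t • r j ∈ T} (sstar j)) :
    (∀ s : Fin n → ℝ, (∀ j, 0 ≤ s j) → (xbar + ∑ j, s j • r j) ∈ S →
      1 ≤ ∑ j, s j / sstar j) ∧ (∑ j, (0:ℝ) / sstar j) < 1 :=
  intersection_cut_general q n T hTclosed hTconv xbar hxbar S hS r sstar hpos hsup
end

section
/- Let f₁, f₂ ∈ (0,1), and let v̄_k, w̄_k ≥ 0 (k = 1,…,4) satisfy the normalizations f₁v̄₁ + f₂w̄₁ = 1, (1−f₁)v̄₂ + f₂w̄₂ = 1, (1−f₁)v̄₃ + (1−f₂)w̄₃ = 1, f₁v̄₄ + (1−f₂)w̄₄ = 1. Let r̄¹, r̄² ∈ ℝ satisfy 0 ≤ f_i + r̄^i ≤ 1 for i = 1,2. Define ᾱ¹ = −r̄¹v̄₁ − r̄²w̄₁, ᾱ² = r̄¹v̄₂ − r̄²w̄₂, ᾱ³ = r̄¹v̄₃ + r̄²w̄₃, ᾱ⁴ = −r̄¹v̄₄ + r̄²w̄₄, and ᾱ = max{ᾱ¹, ᾱ², ᾱ³, ᾱ⁴}.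 Then 0 ≤ ᾱ ≤ 1. -/
/-! Each `ᾱᵏ` has the form `x * v k + y * w k`, where the signs of `x = ±r̄¹` and `y = ±r̄²`
run over all four patterns; whichever pattern matches the signs of `r̄¹, r̄²` gives a
nonnegative `ᾱᵏ`. For the upper bound, `−fᵢ ≤ r̄ⁱ ≤ 1 − fᵢ` bounds `x` and `y` termwise by the
coefficients of the `k`-th normalization, whose value is `1`. -/

theorem mul_add_mul_le_one_of_le {a b x y p q : ℝ} (ha : 0 ≤ a) (hb : 0 ≤ b)
    (hx : x ≤ p) (hy : y ≤ q) (h : p * a + q * b = 1) : x * a + y * b ≤ 1 :=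
  h ▸ add_le_add (mul_le_mul_of_nonneg_right hx ha) (mul_le_mul_of_nonneg_right hy hb)

theorem strengthened_coefficient_in_unit_interval_general (f1 f2 : ℝ)
    (v w : Fin 4 → ℝ) (hv : ∀ k, 0 ≤ v k) (hw : ∀ k, 0 ≤ w k)
    (hn1 : f1 * v 0 + f2 * w 0 = 1)
    (hn2 : (1 - f1) * v 1 + f2 * w 1 = 1)
    (hn3 : (1 - f1) * v 2 + (1 - f2) * w 2 = 1)
    (hn4 : f1 * v 3 + (1 - f2) * w 3 = 1)
    (r1 r2 : ℝ) (hr1 : 0 ≤ f1 + r1) (hr1' : f1 + r1 ≤ 1)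
    (hr2 : 0 ≤ f2 + r2) (hr2' : f2 + r2 ≤ 1) :
    0 ≤ max (max (-r1 * v 0 - r2 * w 0) (r1 * v 1 - r2 * w 1))
          (max (r1 * v 2 + r2 * w 2) (-r1 * v 3 + r2 * w 3)) ∧
      max (max (-r1 * v 0 - r2 * w 0) (r1 * v 1 - r2 * w 1))
          (max (r1 * v 2 + r2 * w 2) (-r1 * v 3 + r2 * w 3)) ≤ 1 := by
  constructor
  · rcases le_total r1 0 with hr1_sign | hr1_sign <;>
      rcases le_total r2 0 with hr2_sign | hr2_sign
    · have := add_nonneg (mul_nonneg (neg_nonneg.2 hr1_sign) (hv 0))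
        (mul_nonneg (neg_nonneg.2 hr2_sign) (hw 0))
      exact le_max_of_le_left (le_max_of_le_left (by linarith))
    · have := add_nonneg (mul_nonneg (neg_nonneg.2 hr1_sign) (hv 3)) (mul_nonneg hr2_sign (hw 3))
      exact le_max_of_le_right (le_max_of_le_right (by linarith))
    · have := add_nonneg (mul_nonneg hr1_sign (hv 1)) (mul_nonneg (neg_nonneg.2 hr2_sign) (hw 1))
      exact le_max_of_le_left (le_max_of_le_right (by linarith))
    · have := add_nonneg (mul_nonneg hr1_sign (hv 2)) (mul_nonneg hr2_sign (hw 2))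
      exact le_max_of_le_right (le_max_of_le_left (by linarith))
  · have h1 := mul_add_mul_le_one_of_le (x := -r1) (y := -r2) (hv 0) (hw 0)
      (by linarith) (by linarith) hn1
    have h2 := mul_add_mul_le_one_of_le (x := r1) (y := -r2) (hv 1) (hw 1)
      (by linarith) (by linarith) hn2
    have h3 := mul_add_mul_le_one_of_le (x := r1) (y := r2) (hv 2) (hw 2)
      (by linarith) (by linarith) hn3
    have h4 := mul_add_mul_le_one_of_le (x := -r1) (y := r2) (hv 3) (hw 3)
      (by linarith) (by linarith) hn4
    exact max_le (max_le (by linarith) (by linarith)) (max_le (by linarith) (by linarith))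

/-- Theorem 7.6: the strengthened (modularized) cut coefficient lies in [0,1]. -/
theorem strengthened_coefficient_in_unit_interval (f1 f2 : ℝ)
    (hf1 : 0 < f1) (hf1' : f1 < 1) (hf2 : 0 < f2) (hf2' : f2 < 1)
    (v w : Fin 4 → ℝ) (hv : ∀ k, 0 ≤ v k) (hw : ∀ k, 0 ≤ w k)
    (hn1 : f1 * v 0 + f2 * w 0 = 1)
    (hn2 : (1 - f1) * v 1 + f2 * w 1 = 1)
    (hn3 : (1 - f1) * v 2 + (1 - f2) * w 2 = 1)
    (hn4 : f1 * v 3 + (1 - f2) * w 3 = 1)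
    (r1 r2 : ℝ) (hr1 : 0 ≤ f1 + r1) (hr1' : f1 + r1 ≤ 1)
    (hr2 : 0 ≤ f2 + r2) (hr2' : f2 + r2 ≤ 1) :
    0 ≤ max (max (-r1 * v 0 - r2 * w 0) (r1 * v 1 - r2 * w 1))
          (max (r1 * v 2 + r2 * w 2) (-r1 * v 3 + r2 * w 3)) ∧
      max (max (-r1 * v 0 - r2 * w 0) (r1 * v 1 - r2 * w 1))
          (max (r1 * v 2 + r2 * w 2) (-r1 * v 3 + r2 * w 3)) ≤ 1 :=
  strengthened_coefficient_in_unit_interval_general f1 f2 v w hv hw hn1 hn2 hn3 hn4 r1 r2 hr1 hr1'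
    hr2 hr2'
end

section
/- Let Q = {1,…,t} index a disjunction ⋁_{k∈Q} (A^k x ≥ a^k_0) valid for a set S ⊆ ℝ^J, where A^k has columns a^k_j ∈ ℝ^m and a^k_0 ∈ ℝ^m. Let θ^k ∈ ℝ^m_+ with θ^k·a^k_0 > 0 for all k, and suppose for each k a vector b^k_0 ≤ a^k_0 is known with A^k x ≥ b^k_0 for all x ∈ S. Fix j* ∈ J, suppose x_{j*} ∈ ℤ and x_{j*} ≥ 0 for all x ∈ S, and all other coordinates x_j ≥ 0. Let M = {m ∈ ℤ^t : Σ_k m^k ≥ 0}. Then for any m ∈ M the inequality Σ_{j≠j*} α_j x_j + ᾱ_{j*} x_{j*} ≥ 1 is valid for S, where α_j = max_k θ^k·a^k_j / θ^k·a^k_0 and ᾱ_{j*} = max_k (θ^k·a^k_{j*} + m^k · θ^k·(a^k_0 − b^k_0)) / θ^k·a^k_0. -/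
/-!
At every `x ∈ S` some term of the shifted disjunction
`⋁ₖ (Aᵏ x ≥ aᵏ₀ - mᵏ x_{j*} (aᵏ₀ - bᵏ₀))` holds. If a satisfied term `k` of the original
disjunction has `mᵏ x_{j*} ≥ 0`, its shift only weakens it. Otherwise `x_{j*} ≥ 1` and, as
`∑ₖ mᵏ ≥ 0`, some `mᵏ ≥ 1`; then `mᵏ x_{j*} ≥ 1` and the shifted term `k` follows from the lower
bound `Aᵏ x ≥ bᵏ₀`. Aggregating that term with the weights `θᵏ` and dividing by `θᵏ aᵏ₀` gives a
cut whose coefficients are dominated by the maxima over `k`.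
-/

open Finset

theorem exists_pos_of_sum_nonneg_of_neg {ι M : Type*} [Fintype ι] [AddCommMonoid M]
    [LinearOrder M] [IsOrderedCancelAddMonoid M] {f : ι → M}
    (hf : 0 ≤ ∑ k, f k) {k₀ : ι} (hk₀ : f k₀ < 0) : ∃ k, 0 < f k := by
  by_contra! h
  have : ∑ k, f k < ∑ _k : ι, 0 := sum_lt_sum (fun k _ => h k) ⟨k₀, mem_univ _, hk₀⟩
  rw [sum_const_zero] at this
  exact this.not_ge hf

theorem exists_shifted_term {ι κ : Type*} [Fintype ι] {y a b : ι → κ → ℝ}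
    (hba : ∀ k i, b k i ≤ a k i) (hby : ∀ k i, b k i ≤ y k i)
    (hay : ∃ k, ∀ i, a k i ≤ y k i) {p : ℤ} (hp : 0 ≤ p) {mv : ι → ℤ}
    (hmv : 0 ≤ ∑ k, mv k) :
    ∃ k, ∀ i, a k i - ((mv k * p : ℤ) : ℝ) * (a k i - b k i) ≤ y k i := by
  obtain ⟨k₀, hk₀⟩ := hay
  by_cases h₀ : 0 ≤ mv k₀ * p
  · refine ⟨k₀, fun i => ?_⟩
    have hc : (0 : ℝ) ≤ ((mv k₀ * p : ℤ) : ℝ) := by exact_mod_cast h₀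
    nlinarith [hk₀ i, hba k₀ i]
  · have hm₀ : mv k₀ < 0 := by nlinarith
    have hp₀ : 0 < p := by nlinarith
    obtain ⟨k₁, hk₁⟩ := exists_pos_of_sum_nonneg_of_neg hmv hm₀
    refine ⟨k₁, fun i => ?_⟩
    have hc : (1 : ℝ) ≤ ((mv k₁ * p : ℤ) : ℝ) := by exact_mod_cast Int.mul_pos hk₁ hp₀
    nlinarith [hby k₁ i, hba k₁ i]

theorem sum_mul_sum_mul_comm {κ ν R : Type*} [Fintype κ] [Fintype ν] [CommSemiring R]
    (θ : κ → R) (A : ν → κ → R) (x : ν → R) :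
    ∑ i, θ i * ∑ j, A j i * x j = ∑ j, (∑ i, θ i * A j i) * x j := by
  simp_rw [mul_sum, sum_mul, mul_assoc]
  exact sum_comm

theorem one_le_cut_of_shifted_term {κ ν : Type*} [Fintype κ] [Fintype ν] [DecidableEq ν]
    {θ a b : κ → ℝ} {A : ν → κ → ℝ} {x : ν → ℝ} {j₀ : ν} {c : ℝ}
    (hθ : ∀ i, 0 ≤ θ i) (hθa : 0 < ∑ i, θ i * a i)
    (hterm : ∀ i, a i - c * x j₀ * (a i - b i) ≤ ∑ j, A j i * x j) :
    1 ≤ ∑ j ∈ univ.erase j₀, (∑ i, θ i * A j i) / (∑ i, θ i * a i) * x j +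
      ((∑ i, θ i * A j₀ i) + c * ∑ i, θ i * (a i - b i)) / (∑ i, θ i * a i) * x j₀ := by
  have hagg : ∑ i, θ i * a i ≤
      ∑ j, (∑ i, θ i * A j i) * x j + c * (∑ i, θ i * (a i - b i)) * x j₀ :=
    calc ∑ i, θ i * a i
        ≤ ∑ i, θ i * (∑ j, A j i * x j + c * x j₀ * (a i - b i)) :=
          sum_le_sum fun i _ => mul_le_mul_of_nonneg_left (by linarith [hterm i]) (hθ i)
      _ = _ := by
          simp_rw [mul_add, sum_add_distrib, sum_mul_sum_mul_comm, mul_sum, sum_mul]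
          congr 1
          exact sum_congr rfl fun i _ => by ring
  rw [← sum_erase_add _ _ (mem_univ j₀)] at hagg
  simp_rw [div_mul_eq_mul_div, ← sum_div, ← add_div]
  rw [one_le_div hθa]
  linarith

/-- Monoidal cut strengthening (Balas–Jeroslow, Theorem 8.1). -/
theorem monoidal_strengthening (n m t : ℕ)
    (S : Set (Fin n → ℝ)) (jstar : Fin n)
    (A : Fin (t + 1) → Fin n → Fin m → ℝ) (a0 : Fin (t + 1) → Fin m → ℝ)
    (θ : Fin (t + 1) → Fin m → ℝ) (hθ : ∀ k i, 0 ≤ θ k i)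
    (hθa0 : ∀ k, 0 < ∑ i, θ k i * a0 k i)
    (b0 : Fin (t + 1) → Fin m → ℝ) (hb0 : ∀ k i, b0 k i ≤ a0 k i)
    (hlb : ∀ x ∈ S, ∀ k i, b0 k i ≤ ∑ j, A k j i * x j)
    (hdisj : ∀ x ∈ S, ∃ k, ∀ i, a0 k i ≤ ∑ j, A k j i * x j)
    (hxnn : ∀ x ∈ S, ∀ j, 0 ≤ x j)
    (hxint : ∀ x ∈ S, ∃ z : ℤ, x jstar = (z : ℝ))
    (mv : Fin (t + 1) → ℤ) (hmv : 0 ≤ ∑ k, mv k) :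
    ∀ x ∈ S,
      1 ≤ (∑ j ∈ Finset.univ.erase jstar,
            (Finset.univ.sup' Finset.univ_nonempty
              (fun k => (∑ i, θ k i * A k j i) / (∑ i, θ k i * a0 k i))) * x j) +
          (Finset.univ.sup' Finset.univ_nonempty
            (fun k => ((∑ i, θ k i * A k jstar i) +
                (mv k : ℝ) * (∑ i, θ k i * (a0 k i - b0 k i))) /
              (∑ i, θ k i * a0 k i))) * x jstar := by
  intro x hx
  obtain ⟨z, hz⟩ := hxint x hx
  have hz₀ : 0 ≤ z := by exact_mod_cast hz ▸ hxnn x hx jstar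
  obtain ⟨k, hk⟩ := exists_shifted_term hb0 (hlb x hx) (hdisj x hx) hz₀ hmv
  have hcut := one_le_cut_of_shifted_term (x := x) (j₀ := jstar) (c := mv k) (hθ k) (hθa0 k)
    fun i => by simpa only [hz, Int.cast_mul, mul_assoc] using hk i
  refine hcut.trans (add_le_add (sum_le_sum fun j _ => ?_) ?_) <;>
    refine mul_le_mul_of_nonneg_right ?_ (hxnn x hx _) <;>
    exact (le_sup'_iff _).2 ⟨k, mem_univ k, le_rfl⟩
end

section
/- Let f₁, f₂ ∈ (0,1), and suppose α ∈ ℝ^n and v_i, w_i ≥ 0 (i = 1,…,4) satisfy, for every j, α_j ≥ −r_j¹v₁ − r_j²w₁, α_j ≥ r_j¹v₂ − r_j²w₂, α_j ≥ r_j¹v₃ + r_j²w₃, α_j ≥ −r_j¹v₄ + r_j²w₄, together with the normalizations f₁v₁+f₂w₁ = 1, (1−f₁)v₂+f₂w₂ = 1, (1−f₁)v₃+(1−f₂)w₃ = 1, f₁v₄+(1−f₂)w₄ = 1. Then α·s ≥ 1 holds for every s ≥ 0 satisfying at least one term of the 4-term disjunction: (−r¹·s ≥ f₁ ∧ −r²·s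 ≥ f₂) ∨ (r¹·s ≥ 1−f₁ ∧ −r²·s ≥ f₂) ∨ (r¹·s ≥ 1−f₁ ∧ r²·s ≥ 1−f₂) ∨ (−r¹·s ≥ f₁ ∧ r²·s ≥ 1−f₂). -/
lemma cglp_aux (n : ℕ) (c d s α : Fin n → ℝ) (p q A B : ℝ)
    (hp : 0 ≤ p) (hq : 0 ≤ q) (hs : ∀ j, 0 ≤ s j)
    (hα : ∀ j, p * c j + q * d j ≤ α j)
    (hA : A ≤ ∑ j, c j * s j) (hB : B ≤ ∑ j, d j * s j)
    (hn : p * A + q * B = 1) : 1 ≤ ∑ j, α j * s j := by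
  calc 1 = p * A + q * B := hn.symm
    _ ≤ p * (∑ j, c j * s j) + q * (∑ j, d j * s j) :=
        add_le_add (mul_le_mul_of_nonneg_left hA hp) (mul_le_mul_of_nonneg_left hB hq)
    _ = ∑ j, (p * c j + q * d j) * s j := by
        rw [Finset.mul_sum, Finset.mul_sum, ← Finset.sum_add_distrib]
        exact Finset.sum_congr rfl fun j _ => by ring
    _ ≤ ∑ j, α j * s j :=
        Finset.sum_le_sum fun j _ => mul_le_mul_of_nonneg_right (hα j) (hs j)

/-- Validity direction of Theorem 5.1 for q = 2: any solution of the CGLP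
yields a cut valid for the union of the four disjunctive polyhedra. -/
theorem cglp_cut_valid_q2 (n : ℕ) (f1 f2 : ℝ)
    (hf1 : 0 < f1) (hf1' : f1 < 1) (hf2 : 0 < f2) (hf2' : f2 < 1)
    (r1 r2 : Fin n → ℝ) (α : Fin n → ℝ) (v w : Fin 4 → ℝ)
    (hv : ∀ i, 0 ≤ v i) (hw : ∀ i, 0 ≤ w i)
    (h1 : ∀ j, -(r1 j) * v 0 - r2 j * w 0 ≤ α j)
    (h2 : ∀ j, r1 j * v 1 - r2 j * w 1 ≤ α j)
    (h3 : ∀ j, r1 j * v 2 + r2 j * w 2 ≤ α j)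
    (h4 : ∀ j, -(r1 j) * v 3 + r2 j * w 3 ≤ α j)
    (hn1 : f1 * v 0 + f2 * w 0 = 1)
    (hn2 : (1 - f1) * v 1 + f2 * w 1 = 1)
    (hn3 : (1 - f1) * v 2 + (1 - f2) * w 2 = 1)
    (hn4 : f1 * v 3 + (1 - f2) * w 3 = 1)
    (s : Fin n → ℝ) (hs : ∀ j, 0 ≤ s j)
    (hdisj :
      (f1 ≤ -(∑ j, r1 j * s j) ∧ f2 ≤ -(∑ j, r2 j * s j)) ∨
      (1 - f1 ≤ ∑ j, r1 j * s j ∧ f2 ≤ -(∑ j, r2 j * s j)) ∨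
      (1 - f1 ≤ ∑ j, r1 j * s j ∧ 1 - f2 ≤ ∑ j, r2 j * s j) ∨
      (f1 ≤ -(∑ j, r1 j * s j) ∧ 1 - f2 ≤ ∑ j, r2 j * s j)) :
    1 ≤ ∑ j, α j * s j := by
  have hneg1 : (∑ j, (fun j => -(r1 j)) j * s j) = -(∑ j, r1 j * s j) := by
    rw [← Finset.sum_neg_distrib]; exact Finset.sum_congr rfl fun j _ => by ring
  have hneg2 : (∑ j, (fun j => -(r2 j)) j * s j) = -(∑ j, r2 j * s j) := by
    rw [← Finset.sum_neg_distrib]; exact Finset.sum_congr rfl fun j _ => by ring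
  rcases hdisj with ⟨ha, hb⟩ | ⟨ha, hb⟩ | ⟨ha, hb⟩ | ⟨ha, hb⟩
  · exact cglp_aux n (fun j => -(r1 j)) (fun j => -(r2 j)) s α (v 0) (w 0) f1 f2
      (hv 0) (hw 0) hs (fun j => by beta_reduce; nlinarith [h1 j])
      (hneg1 ▸ ha) (hneg2 ▸ hb) (by linarith)
  · exact cglp_aux n r1 (fun j => -(r2 j)) s α (v 1) (w 1) (1 - f1) f2
      (hv 1) (hw 1) hs (fun j => by beta_reduce; nlinarith [h2 j])
      ha (hneg2 ▸ hb) (by linarith)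
  · exact cglp_aux n r1 r2 s α (v 2) (w 2) (1 - f1) (1 - f2)
      (hv 2) (hw 2) hs (fun j => by nlinarith [h3 j])
      ha hb (by linarith)
  · exact cglp_aux n (fun j => -(r1 j)) r2 s α (v 3) (w 3) f1 (1 - f2)
      (hv 3) (hw 3) hs (fun j => by beta_reduce; nlinarith [h4 j])
      (hneg1 ▸ ha) hb (by linarith)
end

section
/- Let f₁, f₂ ∈ (0,1) with f₂ < f₁, let r¹, r² ∈ ℝ^n, s ∈ ℝ^n_+. Suppose x₁ = f₁ + r¹·s and x₂ = f₂ + r²·s satisfy x ∈ {0,1}². Define α_j = max{ −r²_j / f₂, (−r¹_j + r²_j)/(f₁ − f₂) } for each j. Then α·s ≥ 1. -/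
/-!
Every `x ∈ {0,1}²` satisfies `x₂ ≤ 0` or `x₂ ≥ x₁`. In terms of `s` these read `-r²·s ≥ f₂` and
`(-r¹ + r²)·s ≥ f₁ - f₂`; dividing by the positive righthand sides and replacing each coefficient by
the larger of the two (harmless since `s ≥ 0`) gives one inequality implied by both terms.
-/

open Finset

section DisjunctiveCut

variable {ι : Type*} (t : Finset ι) (a b s : ι → ℝ)

lemma one_le_sum_div_mul_iff {c : ℝ} (hc : 0 < c) :
    1 ≤ ∑ j ∈ t, a j / c * s j ↔ c ≤ ∑ j ∈ t, a j * s j := by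
  have h : ∑ j ∈ t, a j / c * s j = (∑ j ∈ t, a j * s j) / c := by
    rw [sum_div]
    exact sum_congr rfl fun j _ => div_mul_eq_mul_div _ _ _
  rw [h, one_le_div hc]

lemma one_le_sum_max_mul_of_or (hs : ∀ j ∈ t, 0 ≤ s j)
    (h : 1 ≤ ∑ j ∈ t, a j * s j ∨ 1 ≤ ∑ j ∈ t, b j * s j) :
    1 ≤ ∑ j ∈ t, max (a j) (b j) * s j := by
  rcases h with h | h
  · exact h.trans <| sum_le_sum fun j hj => mul_le_mul_of_nonneg_right (le_max_left _ _) (hs j hj)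
  · exact h.trans <| sum_le_sum fun j hj => mul_le_mul_of_nonneg_right (le_max_right _ _) (hs j hj)

end DisjunctiveCut

lemma le_zero_or_le_of_mem_zero_one {x₁ x₂ : ℝ} (hx₁ : x₁ = 0 ∨ x₁ = 1) (hx₂ : x₂ = 0 ∨ x₂ = 1) :
    x₂ ≤ 0 ∨ x₁ ≤ x₂ := by
  rcases hx₁ with rfl | rfl <;> rcases hx₂ with rfl | rfl <;> norm_num

theorem conic_cut_valid_general (n : ℕ) (f1 f2 : ℝ)
    (hf2 : 0 < f2) (hlt : f2 < f1)
    (r1 r2 : Fin n → ℝ) (s : Fin n → ℝ) (hs : ∀ j, 0 ≤ s j)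
    (hx1 : f1 + ∑ j, r1 j * s j = 0 ∨ f1 + ∑ j, r1 j * s j = 1)
    (hx2 : f2 + ∑ j, r2 j * s j = 0 ∨ f2 + ∑ j, r2 j * s j = 1) :
    1 ≤ ∑ j, max (-(r2 j) / f2) ((-(r1 j) + r2 j) / (f1 - f2)) * s j := by
  apply one_le_sum_max_mul_of_or (hs := fun j _ => hs j)
  rw [one_le_sum_div_mul_iff _ _ _ hf2, one_le_sum_div_mul_iff _ _ _ (sub_pos.mpr hlt)]
  simp only [neg_mul, add_mul, sum_add_distrib, sum_neg_distrib]
  rcases le_zero_or_le_of_mem_zero_one hx1 hx2 with h | h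
  · left; linarith
  · right; linarith

/-- The conic intersection cut from the disjunction `x₂ ≤ 0 ∨ x₂ ≥ x₁` is
valid for all 0-1 points. -/
theorem conic_cut_valid (n : ℕ) (f1 f2 : ℝ)
    (hf2 : 0 < f2) (hlt : f2 < f1) (hf1' : f1 < 1)
    (r1 r2 : Fin n → ℝ) (s : Fin n → ℝ) (hs : ∀ j, 0 ≤ s j)
    (hx1 : f1 + ∑ j, r1 j * s j = 0 ∨ f1 + ∑ j, r1 j * s j = 1)
    (hx2 : f2 + ∑ j, r2 j * s j = 0 ∨ f2 + ∑ j, r2 j * s j = 1) :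
    1 ≤ ∑ j, max (-(r2 j) / f2) ((-(r1 j) + r2 j) / (f1 - f2)) * s j :=
  conic_cut_valid_general n f1 f2 hf2 hlt r1 r2 s hs hx1 hx2
end
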